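/- Let K be a field and let f_1, …, f_r, g_1, …, g_n ∈ K[t_1, …, t_n]. Assume m = (g_1, …, g_n) is a maximal ideal of K[t_1, …, t_n] with residue field κ = K[t_1, …, t_n]/m, that each f_i lies in m, and that the n×n matrix G = (∂g_i/∂t_j mod m) over κ is invertible. Let R = K[t_1, …, t_n]/(f_1, …, f_r) and let m_x be the image of m in R, a maximal ideal of R. Fix polynomials h_{ij} with f_i = Σ_j h_{ij} g_j for all i, and let h̄_{ij} ∈ κ denote h_{ij} mod m. Then the dimension of the κ-vector space m_x/m_x² equals n minus the rank over κ of the r×n matrix (h̄_{ij}). -/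

import Mathlib

/-!
The images of `g_1, …, g_n` form a basis of `m/m²`: they span because they generate `m`, and
they are independent because the partial derivatives induce functionals `m/m² → κ` (Leibniz
rule) whose values on the `g_i` form the invertible matrix `G`. Passing to
`R = K[t]/(f_1, …, f_r)` kills exactly the span of the images of the `f_i` in `m/m²`, and there
`f_i = Σ_j h̄_ij g_j`, so `m_x/m_x²` is `κⁿ` modulo the row space of `(h̄_ij)`.
-/

open Module Submodule Set

theorem Submodule.comap_subtype_span_range {R M ι : Type*} [Semiring R] [AddCommMonoid M]
    [Module R M] {p : Submodule R M} (f : ι → p) :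
    (span R (range fun i => (f i : M))).comap p.subtype = span R (range f) := by
  refine map_injective_of_injective p.injective_subtype ?_
  rw [map_comap_subtype, map_span, ← range_comp, inf_eq_right.mpr]
  · rfl
  · exact span_le.mpr (range_subset_iff.mpr fun i => (f i).2)

theorem finrank_quotient_span_eq_sub_rank {K V ι ι' : Type*} [Field K] [AddCommGroup V]
    [Module K V] [Fintype ι] [Finite ι'] (B : Basis ι K V) (H : Matrix ι' ι K) :
    finrank K (V ⧸ span K (range fun i => ∑ j, H i j • B j)) = Fintype.card ι - H.rank := by
  have hrank : finrank K (span K (range fun i => ∑ j, H i j • B j)) = H.rank := by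
    have hrow : (fun i => ∑ j, H i j • B j) = B.equivFun.symm ∘ H.row := by
      ext i
      exact (B.equivFun_symm_apply _).symm
    rw [hrow, range_comp, span_image_linearEquiv, LinearEquiv.finrank_map_eq,
      Matrix.rank_eq_finrank_span_row]
  have := Module.Finite.of_basis B
  have := (span K (range fun i => ∑ j, H i j • B j)).finrank_quotient_add_finrank
  rw [hrank, finrank_eq_card_basis B] at this
  omega

section

variable {R A : Type*} [CommRing R] [CommRing A] [Algebra R A] {m : Ideal A}

def Derivation.cotangentToQuotient (D : Derivation R A A) (m : Ideal A) :
    m.Cotangent →ₗ[A] A ⧸ m :=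
  Ideal.Cotangent.lift
    { toFun x := Ideal.Quotient.mk m (D x)
      map_add' x y := by simp
      map_smul' a x := by
        have hx : Ideal.Quotient.mk m (x * D a) = 0 :=
          Ideal.Quotient.eq_zero_iff_mem.mpr (m.mul_mem_right _ x.2)
        simp [hx, Algebra.smul_def] }
    fun x y => by
      have hxy : D (x * y) ∈ m := by
        rw [D.leibniz]
        exact add_mem (m.mul_mem_right _ x.2) (m.mul_mem_right _ y.2)
      simpa using Ideal.Quotient.eq_zero_iff_mem.mpr hxy

namespace Ideal

theorem span_range_toCotangent_eq_top {ι : Type*} (g : ι → m)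
    (hg : m = Ideal.span (range fun i => (g i : A))) :
    Submodule.span (A ⧸ m) (range fun i => m.toCotangent (g i)) = ⊤ := by
  rw [← restrictScalars_eq_top_iff A, restrictScalars_span A _ Ideal.Quotient.mk_surjective,
    range_comp', ← Submodule.map_span, ← Submodule.comap_subtype_span_range, ← Ideal.span, ← hg,
    comap_subtype_self, Submodule.map_top, toCotangent_range]

theorem linearIndependent_toCotangent_of_isUnit {ι : Type*} [Fintype ι] [DecidableEq ι]
    (g : ι → m) (D : ι → Derivation R A A)
    (hD : IsUnit (Matrix.of fun i j => Ideal.Quotient.mk m (D j (g i)))) :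
    LinearIndependent (A ⧸ m) fun i => m.toCotangent (g i) := by
  -- `jacobian` sends the `i`-th vector to the `i`-th row of the matrix in `hD`.
  let jacobian : m.Cotangent →ₗ[A ⧸ m] ι → A ⧸ m := LinearMap.pi fun j =>
    ((D j).cotangentToQuotient m).extendScalarsOfSurjective Ideal.Quotient.mk_surjective
  exact .of_comp jacobian (Matrix.linearIndependent_rows_of_isUnit hD)

theorem finrank_cotangent_map_quotient_span {ι : Type*} (f : ι → m) {I : Ideal A}
    (hI : I = Ideal.span (range fun i => (f i : A))) :
    finrank ((A ⧸ I) ⧸ m.map (Ideal.Quotient.mk I)) (m.map (Ideal.Quotient.mk I)).Cotangent =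
      finrank (A ⧸ m)
        (m.Cotangent ⧸ Submodule.span (A ⧸ m) (range fun i => m.toCotangent (f i))) := by
  set W := Submodule.span (A ⧸ m) (range fun i => m.toCotangent (f i))
  have hIm : I ≤ m := hI ▸ Ideal.span_le.mpr (range_subset_iff.mpr fun i => (f i).2)
  have hcomap : (m.map (algebraMap A (A ⧸ I))).comap (algebraMap A (A ⧸ I)) =
      RingHom.ker (algebraMap A (A ⧸ I)) ⊔ m := by
    rw [comap_map_of_surjective' (algebraMap A (A ⧸ I)) Ideal.Quotient.mk_surjective, sup_comm]
  let Φ := m.mapCotangent (m.map (Ideal.Quotient.mk I)) (Algebra.ofId A (A ⧸ I)) le_comap_map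
  have hker : LinearMap.ker Φ = W.restrictScalars A := by
    refine (mapCotangent_ker_of_surjective Ideal.Quotient.mk_surjective hcomap).trans ?_
    rw [Ideal.Quotient.algebraMap_eq, mk_ker, inf_eq_left.mpr hIm, hI,
      Submodule.comap_subtype_span_range, Submodule.map_span, ← range_comp,
      restrictScalars_span A (A ⧸ m) Ideal.Quotient.mk_surjective]
    rfl
  let j : (m.Cotangent ⧸ W) ≃ₗ[A] (m.map (Ideal.Quotient.mk I)).Cotangent :=
    (Submodule.Quotient.restrictScalarsEquiv A W).symm ≪≫ₗ
      Submodule.quotEquivOfEq _ _ hker.symm ≪≫ₗ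
      Φ.quotKerEquivOfSurjective
        (mapCotangent_surjective_of_comap_eq Ideal.Quotient.mk_surjective hcomap)
  let e : (A ⧸ m) ≃ₐ[A] (A ⧸ I) ⧸ m.map (Ideal.Quotient.mk I) :=
    (DoubleQuot.quotQuotEquivQuotOfLEₐ A hIm).symm
  refine (congrArg Cardinal.toNat (rank_eq_of_equiv_equiv e j.toAddEquiv e.bijective ?_)).symm
  -- The residue fields act on both sides through the `A`-action, which `j` preserves.
  rintro ⟨a⟩ x
  exact map_smul j a x

end Ideal

end

/-- Let `m = (g_1, …, g_n)` be a maximal ideal of `K[t_1, …, t_n]` with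
residue field `κ`, suppose each `f_i ∈ m` and the matrix `(∂g_i/∂t_j mod m)` is invertible
over `κ`.  If `R = K[t]/(f_1, …, f_r)`, `m_x` is the image of `m` in `R`, and
`f_i = Σ_j h_{ij} g_j`, then `dim_κ (m_x / m_x²) = n - rank (h̄_{ij})`. -/
theorem finrank_cotangent_eq {K : Type*} [Field K] {n r : ℕ}
    (f : Fin r → MvPolynomial (Fin n) K) (g : Fin n → MvPolynomial (Fin n) K)
    (m : Ideal (MvPolynomial (Fin n) K))
    (hm : m = Ideal.span (Set.range g))
    (hmax : m.IsMaximal)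
    (hfm : ∀ i, f i ∈ m)
    (hGinv : IsUnit (Matrix.of fun i j : Fin n =>
      Ideal.Quotient.mk m (MvPolynomial.pderiv j (g i))))
    (h : Fin r → Fin n → MvPolynomial (Fin n) K)
    (hfh : ∀ i, f i = ∑ j, h i j * g j)
    (mx : Ideal (MvPolynomial (Fin n) K ⧸ Ideal.span (Set.range f)))
    (hmx : mx = m.map (Ideal.Quotient.mk (Ideal.span (Set.range f)))) :
    Module.finrank ((MvPolynomial (Fin n) K ⧸ Ideal.span (Set.range f)) ⧸ mx) mx.Cotangent
      = n - Matrix.rank (Matrix.of fun i j => Ideal.Quotient.mk m (h i j)) := by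
  subst hmx
  let := Ideal.Quotient.field m
  let g' : Fin n → m := fun i => ⟨g i, hm ▸ Ideal.subset_span ⟨i, rfl⟩⟩
  let f' : Fin r → m := fun i => ⟨f i, hfm i⟩
  let B : Basis (Fin n) (MvPolynomial (Fin n) K ⧸ m) m.Cotangent :=
    .mk (m.linearIndependent_toCotangent_of_isUnit g' (fun j => MvPolynomial.pderiv j) hGinv)
      (m.span_range_toCotangent_eq_top g' hm).ge
  have hfB : (fun i => m.toCotangent (f' i)) =
      fun i => ∑ j, (Matrix.of fun i j => Ideal.Quotient.mk m (h i j)) i j • B j := by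
    ext i
    have hf' : f' i = ∑ j, h i j • g' j := Subtype.ext (by simp [f', g', hfh])
    simp [hf', B, ← Ideal.Quotient.algebraMap_eq, algebraMap_smul]
  rw [m.finrank_cotangent_map_quotient_span f' rfl, hfB, finrank_quotient_span_eq_sub_rank,
    Fintype.card_fin]
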